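/- A non-redundant property Γ : T → Set R is elicitable if and only if there exist a convex function G : convexHull(T) → ℝ, a set D of linear maps V → ℝ each of which is a subgradient of G at some point of T, and a bijection φ : R → D such that Γ(t) = {r ∈ R : φ(r) is a subgradient of G at t} for every t ∈ T. -/

import Mathlib

/-!
If `S` elicits `Γ`, its expected score `G x = ⨆ r, S r x` is a supremum of affine functions,
hence convex on the convex hull of `T`, and `S r` is a supporting hyperplane of `G` touching it
exactly on the level set of `r`; so `r ∈ Γ t` iff the linear part of `S r` is a subgradient of
`G` at `t`. Non-redundancy makes every level set nonempty and forces distinct reports to have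
distinct linear parts. Conversely, the tangent planes `x ↦ G (τ r) + φ r (x - τ r)` at points
`τ r ∈ T` where `φ r` is a subgradient form an affine score eliciting `Γ`.
-/

/-- `d` is a subgradient of `G` at `t` relative to `convexHull T`. -/
def IsSubgradientAt {V : Type*} [AddCommGroup V] [Module ℝ V]
    (T : Set V) (G : V → ℝ) (d : V →ₗ[ℝ] ℝ) (t : V) : Prop :=
  ∀ x ∈ convexHull ℝ T, G t + d (x - t) ≤ G x

/-- Each payoff function of `S` is affine. -/
def IsAffineScore {V : Type*} [AddCommGroup V] [Module ℝ V] {R : Type*}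
    (S : R → V → ℝ) : Prop :=
  ∀ r : R, ∃ (ℓ : V →ₗ[ℝ] ℝ) (c : ℝ), ∀ x, S r x = ℓ x + c

/-- `S` elicits the property `Γ` on `T`. -/
def Elicits {V : Type*} [AddCommGroup V] [Module ℝ V] {R : Type*}
    (T : Set V) (S : R → V → ℝ) (Γ : V → Set R) : Prop :=
  ∀ t ∈ T, (∃ r : R, ∀ r' : R, S r' t ≤ S r t) ∧ Γ t = {r : R | ∀ r' : R, S r' t ≤ S r t}

/-- `Γ` is non-redundant. -/
def NonRedundant {V : Type*} [AddCommGroup V] [Module ℝ V] {R : Type*}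
    (T : Set V) (Γ : V → Set R) : Prop :=
  ∀ r r' : R, r ≠ r' → ¬ ({t ∈ T | r' ∈ Γ t} ⊆ {t ∈ T | r ∈ Γ t})

open Set

theorem setOf_forall_le_eq_of_le {R : Type*} {f : R → ℝ} {g : ℝ} (hle : ∀ r, f r ≤ g)
    (hg : ∃ r, f r = g) : {r | ∀ r', f r' ≤ f r} = {r | f r = g} := by
  obtain ⟨r₀, hr₀⟩ := hg
  ext r
  exact ⟨fun hr => le_antisymm (hle r) (hr₀ ▸ hr r₀), fun hr r' => hr ▸ hle r'⟩

section Convex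

variable {E ι : Type*} [AddCommGroup E] [Module ℝ E] {f : ι → E → ℝ}

theorem convex_setOf_bddAbove_range (hf : ∀ i, ConvexOn ℝ univ (f i)) :
    Convex ℝ {x | BddAbove (range fun i => f i x)} := by
  rintro x ⟨Mx, hMx⟩ y ⟨My, hMy⟩ a b ha hb hab
  refine ⟨a * Mx + b * My, ?_⟩
  rintro _ ⟨i, rfl⟩
  calc f i (a • x + b • y) ≤ a • f i x + b • f i y :=
        (hf i).2 (mem_univ x) (mem_univ y) ha hb hab
    _ ≤ a * Mx + b * My := by
        simp only [smul_eq_mul]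
        gcongr
        exacts [hMx ⟨i, rfl⟩, hMy ⟨i, rfl⟩]

theorem bddAbove_range_of_mem_convexHull {T : Set E} (hf : ∀ i, ConvexOn ℝ univ (f i))
    (hT : ∀ t ∈ T, BddAbove (range fun i => f i t)) {x : E} (hx : x ∈ convexHull ℝ T) :
    BddAbove (range fun i => f i x) :=
  convexHull_min hT (convex_setOf_bddAbove_range hf) hx

theorem convexOn_ciSup [Nonempty ι] {s : Set E} (hf : ∀ i, ConvexOn ℝ s (f i))
    (hbdd : ∀ x ∈ s, BddAbove (range fun i => f i x)) :
    ConvexOn ℝ s fun x => ⨆ i, f i x := by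
  refine ⟨(hf (Classical.arbitrary ι)).1, fun x hx y hy a b ha hb hab => ciSup_le fun i => ?_⟩
  calc f i (a • x + b • y) ≤ a • f i x + b • f i y := (hf i).2 hx hy ha hb hab
    _ ≤ a • (⨆ i, f i x) + b • ⨆ i, f i y := by
        gcongr
        exacts [le_ciSup (hbdd x hx) i, le_ciSup (hbdd y hy) i]

end Convex

section Elicitation

variable {V R : Type*} [AddCommGroup V] [Module ℝ V] {T : Set V} {Γ : V → Set R}

theorem IsSubgradientAt.isSubgradientAt_iff {G : V → ℝ} {d : V →ₗ[ℝ] ℝ} {t₀ t : V}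
    (hsub : IsSubgradientAt T G d t₀) (ht₀ : t₀ ∈ convexHull ℝ T) (ht : t ∈ convexHull ℝ T) :
    IsSubgradientAt T G d t ↔ G t₀ + d (t - t₀) = G t := by
  constructor
  · intro h
    have h₁ := h t₀ ht₀
    have h₂ := hsub t ht
    rw [map_sub] at h₁ h₂ ⊢
    linarith
  · intro h x hx
    have := hsub x hx
    rw [map_sub] at this h ⊢
    linarith

theorem NonRedundant.eq_of_subset (hΓ : NonRedundant T Γ) {r r' : R}
    (hsub : {t ∈ T | r' ∈ Γ t} ⊆ {t ∈ T | r ∈ Γ t}) : r = r' :=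
  not_not.1 fun hne => hΓ r r' hne hsub

theorem NonRedundant.exists_mem (hΓ : NonRedundant T Γ) (hT : T.Nonempty)
    (hΓne : ∀ t ∈ T, (Γ t).Nonempty) (r : R) : ∃ t ∈ T, r ∈ Γ t := by
  by_contra! hr
  obtain ⟨t₀, ht₀⟩ := hT
  obtain ⟨r₀, hr₀⟩ := hΓne t₀ ht₀
  obtain rfl : r₀ = r := hΓ.eq_of_subset fun t ht => absurd ht.2 (hr t ht.1)
  exact hr t₀ ht₀ hr₀

noncomputable def maxScore (S : R → V → ℝ) (x : V) : ℝ :=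
  ⨆ r, S r x

namespace Elicits

variable {S : R → V → ℝ}

theorem setOf_mem_subset_of_le (hS : Elicits T S Γ) {r r' : R}
    (hle : ∀ t ∈ T, S r t ≤ S r' t) : {t ∈ T | r ∈ Γ t} ⊆ {t ∈ T | r' ∈ Γ t} := by
  rintro t ⟨ht, hr⟩
  rw [(hS t ht).2] at hr
  exact ⟨ht, (hS t ht).2 ▸ fun r'' => (hr r'').trans (hle t ht)⟩

theorem bddAbove_range (hS : Elicits T S Γ) (hconv : ∀ r, ConvexOn ℝ univ (S r)) {x : V}
    (hx : x ∈ convexHull ℝ T) : BddAbove (range fun r => S r x) :=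
  bddAbove_range_of_mem_convexHull hconv (fun t ht => by
    obtain ⟨r, hr⟩ := (hS t ht).1
    exact ⟨S r t, forall_mem_range.2 hr⟩) hx

theorem le_maxScore (hS : Elicits T S Γ) (hconv : ∀ r, ConvexOn ℝ univ (S r)) (r : R) {x : V}
    (hx : x ∈ convexHull ℝ T) : S r x ≤ maxScore S x :=
  le_ciSup (hS.bddAbove_range hconv hx) r

theorem convexOn_maxScore [Nonempty R] (hS : Elicits T S Γ)
    (hconv : ∀ r, ConvexOn ℝ univ (S r)) : ConvexOn ℝ (convexHull ℝ T) (maxScore S) :=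
  convexOn_ciSup (fun r => (hconv r).subset (subset_univ _) (convex_convexHull ℝ T))
    fun _ hx => hS.bddAbove_range hconv hx

theorem mem_iff_eq_maxScore (hS : Elicits T S Γ) (hconv : ∀ r, ConvexOn ℝ univ (S r))
    {t : V} (ht : t ∈ T) (r : R) : r ∈ Γ t ↔ S r t = maxScore S t := by
  have hle := fun r => hS.le_maxScore hconv r (subset_convexHull ℝ T ht)
  obtain ⟨⟨r₀, hr₀⟩, hΓt⟩ := hS t ht
  have : Nonempty R := ⟨r₀⟩
  have hattained : S r₀ t = maxScore S t := le_antisymm (hle r₀) (ciSup_le hr₀)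
  rw [hΓt, setOf_forall_le_eq_of_le hle ⟨r₀, hattained⟩]
  exact Iff.rfl

end Elicits

theorem convexOn_linearMap_add_const (ℓ : V →ₗ[ℝ] ℝ) (c : ℝ) : ConvexOn ℝ univ fun x => ℓ x + c :=
  (ℓ.convexOn convex_univ).add_const c

section AffineScore

variable {ℓ : R → V →ₗ[ℝ] ℝ} {c : R → ℝ}

theorem Elicits.mem_iff_isSubgradientAt (hS : Elicits T (fun r x => ℓ r x + c r) Γ)
    (hΓ : NonRedundant T Γ) (hT : T.Nonempty) (hΓne : ∀ t ∈ T, (Γ t).Nonempty)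
    {t : V} (ht : t ∈ T) (r : R) :
    r ∈ Γ t ↔ IsSubgradientAt T (maxScore fun r x => ℓ r x + c r) (ℓ r) t := by
  have hconv r := convexOn_linearMap_add_const (ℓ r) (c r)
  obtain ⟨t₀, ht₀, hr₀⟩ := hΓ.exists_mem hT hΓne r
  have hmax₀ := (hS.mem_iff_eq_maxScore hconv ht₀ r).1 hr₀
  have hsub₀ : IsSubgradientAt T (maxScore fun r x => ℓ r x + c r) (ℓ r) t₀ := by
    intro x hx
    have hle := hS.le_maxScore hconv r hx
    rw [← hmax₀, map_sub]
    linarith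
  have htangent : maxScore (fun r x => ℓ r x + c r) t₀ + ℓ r (t - t₀) = ℓ r t + c r := by
    rw [← hmax₀, map_sub]
    ring
  rw [hS.mem_iff_eq_maxScore hconv ht r,
    hsub₀.isSubgradientAt_iff (subset_convexHull ℝ T ht₀) (subset_convexHull ℝ T ht), htangent]

theorem Elicits.injective_linearPart (hS : Elicits T (fun r x => ℓ r x + c r) Γ)
    (hΓ : NonRedundant T Γ) : Function.Injective ℓ := by
  intro r r' hrr'
  have hle {r r' : R} (hℓ : ℓ r = ℓ r') (hc : c r ≤ c r') :
      {t ∈ T | r ∈ Γ t} ⊆ {t ∈ T | r' ∈ Γ t} :=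
    hS.setOf_mem_subset_of_le fun t _ => by simp only [hℓ]; linarith
  rcases le_total (c r) (c r') with hc | hc
  · exact (hΓ.eq_of_subset (hle hrr' hc)).symm
  · exact hΓ.eq_of_subset (hle hrr'.symm hc)

end AffineScore

theorem elicits_tangent {G : V → ℝ} {φ : R → V →ₗ[ℝ] ℝ} {τ : R → V}
    (hτ : ∀ r, τ r ∈ T) (hsub : ∀ r, IsSubgradientAt T G (φ r) (τ r))
    (hΓne : ∀ t ∈ T, (Γ t).Nonempty) (hΓG : ∀ t ∈ T, Γ t = {r | IsSubgradientAt T G (φ r) t}) :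
    Elicits T (fun r x => G (τ r) + φ r (x - τ r)) Γ := by
  intro t ht
  have hΓt : Γ t = {r | G (τ r) + φ r (t - τ r) = G t} := by
    rw [hΓG t ht]
    ext r
    exact (hsub r).isSubgradientAt_iff (subset_convexHull ℝ T (hτ r)) (subset_convexHull ℝ T ht)
  obtain ⟨r₀, hr₀⟩ := hΓne t ht
  rw [hΓt] at hr₀
  have hargmax := setOf_forall_le_eq_of_le (fun r => hsub r t (subset_convexHull ℝ T ht)) ⟨r₀, hr₀⟩
  refine ⟨⟨r₀, ?_⟩, hΓt.trans hargmax.symm⟩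
  rw [← hargmax] at hr₀
  exact hr₀

theorem isAffineScore_tangent (G : V → ℝ) (φ : R → V →ₗ[ℝ] ℝ) (τ : R → V) :
    IsAffineScore fun r x => G (τ r) + φ r (x - τ r) :=
  fun r => ⟨φ r, G (τ r) - φ r (τ r), fun x => by
    simp only [map_sub]
    ring⟩

end Elicitation

/-- A non-redundant property is elicitable iff its level sets arise as the subgradient
level sets of some convex function via a bijection of reports. -/
theorem elicitable_characterization {V : Type*} [AddCommGroup V] [Module ℝ V]
    {R : Type*} (T : Set V) (hT : T.Nonempty) (Γ : V → Set R)
    (hΓne : ∀ t ∈ T, (Γ t).Nonempty) (hΓ : NonRedundant T Γ) :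
    (∃ S : R → V → ℝ, IsAffineScore S ∧ Elicits T S Γ) ↔
    ∃ (G : V → ℝ) (D : Set (V →ₗ[ℝ] ℝ)) (φ : R → (V →ₗ[ℝ] ℝ)),
      ConvexOn ℝ (convexHull ℝ T) G ∧
      (∀ d ∈ D, ∃ t ∈ T, IsSubgradientAt T G d t) ∧
      Function.Injective φ ∧ Set.range φ = D ∧
      (∀ t ∈ T, Γ t = {r : R | IsSubgradientAt T G (φ r) t}) := by
  constructor
  · rintro ⟨S, hS, hSΓ⟩
    choose ℓ c hℓc using hS
    obtain rfl : S = fun r x => ℓ r x + c r := funext fun r => funext (hℓc r)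
    have : Nonempty R := ⟨(hΓne _ hT.some_mem).some⟩
    have hsub : ∀ t ∈ T, ∀ r, r ∈ Γ t ↔ _ := fun t ht =>
      hSΓ.mem_iff_isSubgradientAt hΓ hT hΓne ht
    refine ⟨_, range ℓ, ℓ,
      hSΓ.convexOn_maxScore fun r => convexOn_linearMap_add_const (ℓ r) (c r), ?_,
      hSΓ.injective_linearPart hΓ, rfl, fun t ht => Set.ext (hsub t ht)⟩
    rintro _ ⟨r, rfl⟩
    obtain ⟨t, ht, hr⟩ := hΓ.exists_mem hT hΓne r
    exact ⟨t, ht, (hsub t ht r).1 hr⟩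
  · rintro ⟨G, _, φ, -, hD, -, rfl, hΓG⟩
    choose τ hτ hsub using fun r => hD (φ r) ⟨r, rfl⟩
    exact ⟨_, isAffineScore_tangent G φ τ, elicits_tangent hτ hsub hΓne hΓG⟩
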